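/- For every smooth compactly supported function w on (0,∞): ∫₀^∞ (ΛZ(y)/y)·(A*w)(y)·w(y) · y dy = ∫₀^∞ (ΛZ(y)/y²)·w(y)² · y dy ≤ 0, where ΛZ(y) = y·Z'(y) = Z(y)² − 1 ≤ 0. (This sign identity underlies the Morawetz part of the mixed energy/Morawetz functional.) -/

import Mathlib

open MeasureTheory Real Set

noncomputable section

/-- `Z(y) = (1-y²)/(1+y²)`. -/
def Zfun (y : ℝ) : ℝ := (1 - y ^ 2) / (1 + y ^ 2)

/-- `A*w = w' + ((1+Z)/y) w`. -/
def Astar (w : ℝ → ℝ) (y : ℝ) : ℝ := deriv w y + (1 + Zfun y) / y * w y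

/-!
On `y > 0` the difference of the two integrands is `ΛZ w w' + Z Z' w²`, which by `ΛZ = Z² - 1`
is the derivative of `(Z² - 1) w² / 2`. This compactly supported function vanishes at `y = 0`
because `Z(0) = 1`, so the difference integrates to zero. The sign comes from `|Z| ≤ 1`.
-/

lemma hasDerivAt_Zfun (y : ℝ) : HasDerivAt Zfun (-4 * y / (1 + y ^ 2) ^ 2) y := by
  have hden : 1 + y ^ 2 ≠ 0 := by positivity
  have hnum : HasDerivAt (fun y : ℝ => 1 - y ^ 2) (-(2 * y)) y := by
    simpa using (hasDerivAt_pow 2 y).const_sub 1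
  have hden' : HasDerivAt (fun y : ℝ => 1 + y ^ 2) (2 * y) y := by
    simpa using (hasDerivAt_pow 2 y).const_add 1
  exact (hnum.div hden' hden).congr_deriv (by ring)

lemma deriv_Zfun : deriv Zfun = fun y => -4 * y / (1 + y ^ 2) ^ 2 :=
  funext fun y => (hasDerivAt_Zfun y).deriv

lemma contDiff_Zfun : ContDiff ℝ 1 Zfun :=
  (contDiff_const.sub (contDiff_id.pow 2)).div (contDiff_const.add (contDiff_id.pow 2))
    fun y => by positivity

lemma mul_deriv_Zfun (y : ℝ) : y * deriv Zfun y = Zfun y ^ 2 - 1 := by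
  have hden : 1 + y ^ 2 ≠ 0 := by positivity
  rw [deriv_Zfun, Zfun]
  field_simp
  ring

lemma Zfun_sq_sub_one_nonpos (y : ℝ) : Zfun y ^ 2 - 1 ≤ 0 := by
  have hden : 0 < 1 + y ^ 2 := by positivity
  have habs : |Zfun y| ≤ 1 := by
    rw [Zfun, abs_div, abs_of_pos hden, div_le_one hden, abs_le]
    constructor <;> nlinarith [sq_nonneg y]
  nlinarith [abs_nonneg (Zfun y), sq_abs (Zfun y)]

lemma hasDerivAt_Zfun_sq_sub_one_mul_sq {w : ℝ → ℝ} {w' y : ℝ}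
    (hw : HasDerivAt w w' y) :
    HasDerivAt (fun y => (Zfun y ^ 2 - 1) * w y ^ 2 / 2)
      (Zfun y * deriv Zfun y * w y ^ 2 + (Zfun y ^ 2 - 1) * w y * w') y := by
  have hZ : HasDerivAt Zfun (deriv Zfun y) y :=
    (contDiff_Zfun.differentiable one_ne_zero y).hasDerivAt
  exact ((((hZ.pow 2).sub_const 1).mul (hw.pow 2)).div_const 2).congr_deriv (by simp; ring)

lemma morawetz_integrand_eq {w : ℝ → ℝ} {y : ℝ} (hw : DifferentiableAt ℝ w y)
    (hy : y ≠ 0) :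
    (y * deriv Zfun y / y) * Astar w y * w y * y
      = (y * deriv Zfun y / y ^ 2) * w y ^ 2 * y
        + deriv (fun y => (Zfun y ^ 2 - 1) * w y ^ 2 / 2) y := by
  rw [(hasDerivAt_Zfun_sq_sub_one_mul_sq hw.hasDerivAt).deriv, ← mul_deriv_Zfun, Astar]
  field_simp
  ring

lemma integrableOn_Ioi_morawetz_weight_mul_sq {w : ℝ → ℝ} (hw : Continuous w)
    (hsupp : HasCompactSupport w) :
    IntegrableOn (fun y => (y * deriv Zfun y / y ^ 2) * w y ^ 2 * y) (Ioi 0) := by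
  have hsq : HasCompactSupport fun y => w y ^ 2 :=
    hsupp.comp_left (g := (· ^ 2)) (zero_pow two_ne_zero)
  refine (integrableOn_congr_fun (fun y (hy : 0 < y) => ?_) measurableSet_Ioi).mpr
    ((contDiff_Zfun.continuous_deriv le_rfl).mul (hw.pow 2)
      |>.integrable_of_hasCompactSupport hsq.mul_left).integrableOn
  simp only [Pi.mul_apply, Pi.pow_apply]
  field_simp

theorem morawetz_sign_identity_general (w : ℝ → ℝ)
    (hw : ContDiff ℝ (⊤ : ℕ∞) w) (hsupp : HasCompactSupport w) :
    (∀ y : ℝ, 0 < y →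
      y * deriv Zfun y = (Zfun y) ^ 2 - 1 ∧ y * deriv Zfun y ≤ 0) ∧
    (∫ y in Set.Ioi (0:ℝ), (y * deriv Zfun y / y) * Astar w y * w y * y)
      = (∫ y in Set.Ioi (0:ℝ), (y * deriv Zfun y / y ^ 2) * (w y) ^ 2 * y) ∧
    (∫ y in Set.Ioi (0:ℝ), (y * deriv Zfun y / y ^ 2) * (w y) ^ 2 * y) ≤ 0 := by
  set G := fun y => (Zfun y ^ 2 - 1) * w y ^ 2 / 2
  have hw1 : ContDiff ℝ 1 w := hw.of_le (by exact_mod_cast le_top)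
  have hG : ContDiff ℝ 1 G :=
    ((contDiff_Zfun.pow 2).sub contDiff_const).mul (hw1.pow 2) |>.div_const 2
  have hGsupp : HasCompactSupport G := hsupp.mono fun y hy h0 => hy (by simp [G, h0])
  have hint := integrableOn_Ioi_morawetz_weight_mul_sq hw1.continuous hsupp
  refine ⟨fun y _ => ⟨mul_deriv_Zfun y, mul_deriv_Zfun y ▸ Zfun_sq_sub_one_nonpos y⟩,
    ?_, ?_⟩
  · calc _ = ∫ y in Ioi (0:ℝ), ((y * deriv Zfun y / y ^ 2) * w y ^ 2 * y + deriv G y) :=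
          setIntegral_congr_fun measurableSet_Ioi fun y hy =>
            morawetz_integrand_eq (hw1.differentiable one_ne_zero y) (ne_of_gt hy)
      _ = _ := by
        have hG' : Integrable (deriv G) :=
          (hG.continuous_deriv le_rfl).integrable_of_hasCompactSupport hGsupp.deriv
        rw [integral_add hint hG'.integrableOn, hGsupp.integral_Ioi_deriv_eq hG 0]
        simp [G, Zfun]
  · refine setIntegral_nonpos measurableSet_Ioi fun y (hy : 0 < y) => ?_
    rw [mul_deriv_Zfun]
    have hweight : (Zfun y ^ 2 - 1) / y ^ 2 ≤ 0 :=
      div_nonpos_of_nonpos_of_nonneg (Zfun_sq_sub_one_nonpos y) (sq_nonneg y)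
    exact mul_nonpos_of_nonpos_of_nonneg
      (mul_nonpos_of_nonpos_of_nonneg hweight (sq_nonneg _)) hy.le

/-- Sign identity behind the Morawetz functional: for smooth compactly supported `w`
on `(0,∞)`, with `ΛZ(y) = y Z'(y) = Z(y)² − 1 ≤ 0`,
`∫ (ΛZ/y)(A*w) w y dy = ∫ (ΛZ/y²) w² y dy ≤ 0`. -/
theorem morawetz_sign_identity (w : ℝ → ℝ)
    (hw : ContDiff ℝ (⊤ : ℕ∞) w) (hsupp : HasCompactSupport w)
    (hsupp' : tsupport w ⊆ Set.Ioi 0) :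
    (∀ y : ℝ, 0 < y →
      y * deriv Zfun y = (Zfun y) ^ 2 - 1 ∧ y * deriv Zfun y ≤ 0) ∧
    (∫ y in Set.Ioi (0:ℝ), (y * deriv Zfun y / y) * Astar w y * w y * y)
      = (∫ y in Set.Ioi (0:ℝ), (y * deriv Zfun y / y ^ 2) * (w y) ^ 2 * y) ∧
    (∫ y in Set.Ioi (0:ℝ), (y * deriv Zfun y / y ^ 2) * (w y) ^ 2 * y) ≤ 0 :=
  morawetz_sign_identity_general w hw hsupp
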